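/- In the setting of the preceding construction (X, Y with countable coinitial subsets, M pfd and weakly exact, R a rectangle satisfying Ker⁺_{r,s} ∩ Ker⁺_{t,s} ⊆ Im⁺_{R,s} for all s ∈ R, and M_R the submodule obtained from a complement W of L⁻ in L⁺ chosen inside lim_{u∈R}(Ker⁺_{r,u} ∩ Ker⁺_{t,u})), the submodule M_R is isomorphic to a direct sum of dim C_R(M) copies of the rectangle module k_R, where C_R(M) = lim_{u∈R} V⁺_{R,u}(M)/V⁻_{R,u}(M) is the counting functor. -/

import Mathlib

open CategoryTheory

attribute [local instance 10000] Preorder.smallCategory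

attribute [local instance] Classical.propDecidable

abbrev PersistenceModule (K : Type) [Field K] (P : Type) [Preorder P] := P ⥤ ModuleCat.{0} K

variable (K : Type) [Field K]

/-- The internal linear map of a persistence module associated to `s ≤ t`. -/
def rho {P : Type} [Preorder P] (M : PersistenceModule K P) {s t : P} (h : s ≤ t) :
    M.obj s →ₗ[K] M.obj t :=
  (M.map (homOfLE h)).hom

def Pfd {P : Type} [Preorder P] (M : PersistenceModule K P) : Prop :=
  ∀ p : P, FiniteDimensional K (M.obj p)

def IsConvexSet {P : Type} [Preorder P] (S : Set P) : Prop :=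
  ∀ ⦃p s q : P⦄, p ≤ s → s ≤ q → p ∈ S → q ∈ S → s ∈ S

def IsConnectedSet {P : Type} [Preorder P] (S : Set P) : Prop :=
  ∀ p ∈ S, ∀ q ∈ S,
    Relation.ReflTransGen (fun a b => a ∈ S ∧ b ∈ S ∧ (a ≤ b ∨ b ≤ a)) p q

def IsIntervalSet {P : Type} [Preorder P] (S : Set P) : Prop :=
  IsConvexSet S ∧ IsConnectedSet S

def IsRectangleSet {X Y : Type} [Preorder X] [Preorder Y] (R : Set (X × Y)) : Prop :=
  ∃ (I : Set X) (J : Set Y), IsIntervalSet I ∧ IsIntervalSet J ∧ R = I ×ˢ J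

/-- The direct sum of the interval (indicator) modules of a family of convex sets. -/
noncomputable def intervalDirectSum {P : Type} [Preorder P] {ι : Type} (S : ι → Set P)
    (hS : ∀ i, IsConvexSet (S i)) : PersistenceModule K P where
  obj t := ModuleCat.of K ({i : ι // t ∈ S i} → K)
  map {s t} _ := ModuleCat.ofHom
    (LinearMap.pi (fun j : {i : ι // t ∈ S i} =>
      if hs : (s : P) ∈ S j.1 then LinearMap.proj (⟨j.1, hs⟩ : {i : ι // s ∈ S i}) else 0))
  map_id t := by
    refine ModuleCat.hom_ext (LinearMap.ext fun v => funext fun j => ?_)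
    show ((if hs : (t : P) ∈ S j.1 then
        LinearMap.proj (⟨j.1, hs⟩ : {i : ι // t ∈ S i}) else 0 :
          ({i : ι // t ∈ S i} → K) →ₗ[K] K)) v = v j
    rw [dif_pos j.2]
    rfl
  map_comp {s t u} f g := by
    refine ModuleCat.hom_ext (LinearMap.ext fun v => funext fun j => ?_)
    show ((if hs : (s : P) ∈ S j.1 then
        LinearMap.proj (⟨j.1, hs⟩ : {i : ι // s ∈ S i}) else 0 :
          ({i : ι // s ∈ S i} → K) →ₗ[K] K)) v =
      ((if ht : (t : P) ∈ S j.1 then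
        LinearMap.proj (⟨j.1, ht⟩ : {i : ι // t ∈ S i}) else 0 :
          ({i : ι // t ∈ S i} → K) →ₗ[K] K))
        (LinearMap.pi (fun j' : {i : ι // t ∈ S i} =>
          (if hs : (s : P) ∈ S j'.1 then
            LinearMap.proj (⟨j'.1, hs⟩ : {i : ι // s ∈ S i}) else 0 :
              ({i : ι // s ∈ S i} → K) →ₗ[K] K)) v)
    by_cases hs : (s : P) ∈ S j.1
    · have ht : (t : P) ∈ S j.1 := hS j.1 (leOfHom f) (leOfHom g) hs j.2
      rw [dif_pos hs, dif_pos ht, LinearMap.proj_apply, LinearMap.proj_apply,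
        LinearMap.pi_apply, dif_pos hs]
      rfl
    · by_cases ht : (t : P) ∈ S j.1
      · rw [dif_neg hs, dif_pos ht, LinearMap.zero_apply, LinearMap.proj_apply,
          LinearMap.pi_apply, dif_neg hs, LinearMap.zero_apply]
      · rw [dif_neg hs, dif_neg ht, LinearMap.zero_apply, LinearMap.zero_apply]

def InDec {P : Type} [Preorder P] (M : PersistenceModule K P) (𝒮 : Set (Set P)) : Prop :=
  ∃ (ι : Type) (S : ι → Set P) (hS : ∀ i, IsConvexSet (S i)),
    (∀ i, S i ∈ 𝒮) ∧ (∀ t : P, {i | t ∈ S i}.Finite) ∧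
      Nonempty (M ≅ intervalDirectSum K S hS)

def restrictMod {P : Type} [Preorder P] (M : PersistenceModule K P) (Q : Set P) :
    PersistenceModule K ↥Q :=
  (Subtype.mono_coe (· ∈ Q)).functor ⋙ M

def restrictClass {P : Type} (𝒮 : Set (Set P)) (Q : Set P) : Set (Set ↥Q) :=
  {T | ∃ S ∈ 𝒮, T = Subtype.val ⁻¹' S}

/-- Weak exactness of a persistence bimodule. -/
def WeaklyExact {X Y : Type} [Preorder X] [Preorder Y]
    (M : PersistenceModule K (X × Y)) : Prop :=
  ∀ (s t : X × Y) (h : s ≤ t),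
    (LinearMap.range (rho K M h) =
      LinearMap.range (rho K M (show (t.1, s.2) ≤ t from ⟨le_rfl, h.2⟩)) ⊓
      LinearMap.range (rho K M (show (s.1, t.2) ≤ t from ⟨h.1, le_rfl⟩))) ∧
    (LinearMap.ker (rho K M h) =
      LinearMap.ker (rho K M (show s ≤ (t.1, s.2) from ⟨h.1, le_rfl⟩)) ⊔
      LinearMap.ker (rho K M (show s ≤ (s.1, t.2) from ⟨le_rfl, h.2⟩)))

/-! ## Cuts, rectangles via cuts, and the functorial filtration -/

/-- A cut of a totally ordered set: a partition into a lower and an upper part. -/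
structure Cut (X : Type) [LinearOrder X] where
  lower : Set X
  upper : Set X
  union_eq : lower ∪ upper = Set.univ
  lt : ∀ x ∈ lower, ∀ y ∈ upper, x < y

theorem Cut.mem_upper_of_le {X : Type} [LinearOrder X] (c : Cut X) {a b : X}
    (ha : a ∈ c.upper) (h : a ≤ b) : b ∈ c.upper := by
  have hb : b ∈ c.lower ∪ c.upper := by rw [c.union_eq]; trivial
  rcases hb with hb | hb
  · exact absurd (lt_of_lt_of_le (c.lt b hb a ha) h) (lt_irrefl b)
  · exact hb

theorem Cut.mem_lower_of_le {X : Type} [LinearOrder X] (c : Cut X) {a b : X}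
    (hb : b ∈ c.lower) (h : a ≤ b) : a ∈ c.lower := by
  have hb' : a ∈ c.lower ∪ c.upper := by rw [c.union_eq]; trivial
  rcases hb' with hb' | hb'
  · exact hb'
  · exact absurd (lt_of_lt_of_le (c.lt b hb a hb') h) (lt_irrefl b)

/-- The rectangle `(l⁺ ∩ r⁻) × (b⁺ ∩ t⁻)` associated to four cuts. -/
def rectOf {X Y : Type} [LinearOrder X] [LinearOrder Y]
    (l r : Cut X) (b t : Cut Y) : Set (X × Y) :=
  (l.upper ∩ r.lower) ×ˢ (b.upper ∩ t.lower)

theorem isConvex_rectOf {X Y : Type} [LinearOrder X] [LinearOrder Y]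
    (l r : Cut X) (b t : Cut Y) : IsConvexSet (rectOf l r b t) := by
  rintro p s q hps hsq ⟨⟨hp1, hp2⟩, hp3, hp4⟩ ⟨⟨hq1, hq2⟩, hq3, hq4⟩
  exact ⟨⟨l.mem_upper_of_le hp1 hps.1, r.mem_lower_of_le hq2 hsq.1⟩,
    b.mem_upper_of_le hp3 hps.2, t.mem_lower_of_le hq4 hsq.2⟩

/-- The upset `R⁺` of a subset of a poset. -/
def upsetOf {P : Type} [Preorder P] (R : Set P) : Set P := {u | ∃ s ∈ R, s ≤ u}

theorem isConvex_upsetOf {P : Type} [Preorder P] (R : Set P) : IsConvexSet (upsetOf R) := by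
  rintro p s q hps _ ⟨w, hw, hwp⟩ _
  exact ⟨w, hw, hwp.trans hps⟩

theorem IsConvexSet.inter {P : Type} [Preorder P] {A B : Set P}
    (hA : IsConvexSet A) (hB : IsConvexSet B) : IsConvexSet (A ∩ B) := by
  rintro p s q hps hsq ⟨hpA, hpB⟩ ⟨hqA, hqB⟩
  exact ⟨hA hps hsq hpA hqA, hB hps hsq hpB hqB⟩

variable {X Y : Type} [LinearOrder X] [LinearOrder Y]

/-- Horizontal image space `Im⁺_{l,u}`. -/
noncomputable def ImPlusH (M : PersistenceModule K (X × Y)) (l : Cut X) (u : X × Y) :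
    Submodule K (M.obj u) :=
  ⨅ (x : X) (h : x ∈ l.upper ∧ x ≤ u.1),
    LinearMap.range (rho K M (show (x, u.2) ≤ u from ⟨h.2, le_rfl⟩))

/-- Horizontal image space `Im⁻_{l,u}`. -/
noncomputable def ImMinusH (M : PersistenceModule K (X × Y)) (l : Cut X) (u : X × Y) :
    Submodule K (M.obj u) :=
  ⨆ (x : X) (h : x ∈ l.lower ∧ x ≤ u.1),
    LinearMap.range (rho K M (show (x, u.2) ≤ u from ⟨h.2, le_rfl⟩))

/-- Horizontal kernel space `Ker⁺_{r,u}`. -/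
noncomputable def KerPlusH (M : PersistenceModule K (X × Y)) (r : Cut X) (u : X × Y) :
    Submodule K (M.obj u) :=
  ⨅ (x : X) (h : x ∈ r.upper ∧ u.1 ≤ x),
    LinearMap.ker (rho K M (show u ≤ (x, u.2) from ⟨h.2, le_rfl⟩))

/-- Horizontal kernel space `Ker⁻_{r,u}`. -/
noncomputable def KerMinusH (M : PersistenceModule K (X × Y)) (r : Cut X) (u : X × Y) :
    Submodule K (M.obj u) :=
  ⨆ (x : X) (h : x ∈ r.lower ∧ u.1 ≤ x),
    LinearMap.ker (rho K M (show u ≤ (x, u.2) from ⟨h.2, le_rfl⟩))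

/-- Vertical image space `Im⁺_{b,u}`. -/
noncomputable def ImPlusV (M : PersistenceModule K (X × Y)) (b : Cut Y) (u : X × Y) :
    Submodule K (M.obj u) :=
  ⨅ (y : Y) (h : y ∈ b.upper ∧ y ≤ u.2),
    LinearMap.range (rho K M (show (u.1, y) ≤ u from ⟨le_rfl, h.2⟩))

/-- Vertical image space `Im⁻_{b,u}`. -/
noncomputable def ImMinusV (M : PersistenceModule K (X × Y)) (b : Cut Y) (u : X × Y) :
    Submodule K (M.obj u) :=
  ⨆ (y : Y) (h : y ∈ b.lower ∧ y ≤ u.2),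
    LinearMap.range (rho K M (show (u.1, y) ≤ u from ⟨le_rfl, h.2⟩))

/-- Vertical kernel space `Ker⁺_{t,u}`. -/
noncomputable def KerPlusV (M : PersistenceModule K (X × Y)) (t : Cut Y) (u : X × Y) :
    Submodule K (M.obj u) :=
  ⨅ (y : Y) (h : y ∈ t.upper ∧ u.2 ≤ y),
    LinearMap.ker (rho K M (show u ≤ (u.1, y) from ⟨le_rfl, h.2⟩))

/-- Vertical kernel space `Ker⁻_{t,u}`. -/
noncomputable def KerMinusV (M : PersistenceModule K (X × Y)) (t : Cut Y) (u : X × Y) :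
    Submodule K (M.obj u) :=
  ⨆ (y : Y) (h : y ∈ t.lower ∧ u.2 ≤ y),
    LinearMap.ker (rho K M (show u ≤ (u.1, y) from ⟨le_rfl, h.2⟩))

/-- `Im⁺_{R,u}`. -/
noncomputable def ImPlusR (M : PersistenceModule K (X × Y)) (l : Cut X) (b : Cut Y)
    (u : X × Y) : Submodule K (M.obj u) :=
  ImPlusH K M l u ⊓ ImPlusV K M b u

/-- `Im⁻_{R,u}`. -/
noncomputable def ImMinusR (M : PersistenceModule K (X × Y)) (l : Cut X) (b : Cut Y)
    (u : X × Y) : Submodule K (M.obj u) :=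
  (ImMinusH K M l u ⊔ ImMinusV K M b u) ⊓ ImPlusR K M l b u

/-- `Ker⁺_{R,u}`. -/
noncomputable def KerPlusR (M : PersistenceModule K (X × Y)) (r : Cut X) (t : Cut Y)
    (u : X × Y) : Submodule K (M.obj u) :=
  (KerPlusH K M r u ⊔ KerMinusV K M t u) ⊓ (KerMinusH K M r u ⊔ KerPlusV K M t u)

/-- `Ker⁻_{R,u}`. -/
noncomputable def KerMinusR (M : PersistenceModule K (X × Y)) (r : Cut X) (t : Cut Y)
    (u : X × Y) : Submodule K (M.obj u) :=
  KerMinusH K M r u ⊔ KerMinusV K M t u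

/-- The pointwise functorial filtration `V⁺_{R,u}(M)` (meaningful for `u ∈ R`). -/
noncomputable def VplusAt (M : PersistenceModule K (X × Y)) (l r : Cut X) (b t : Cut Y)
    (u : X × Y) : Submodule K (M.obj u) :=
  ImPlusR K M l b u ⊓ KerPlusR K M r t u

/-- The pointwise functorial filtration `V⁻_{R,u}(M)` (meaningful for `u ∈ R`). -/
noncomputable def VminusAt (M : PersistenceModule K (X × Y)) (l r : Cut X) (b t : Cut Y)
    (u : X × Y) : Submodule K (M.obj u) :=
  ImPlusR K M l b u ⊓ KerMinusR K M r t u ⊔ ImMinusR K M l b u ⊓ KerPlusR K M r t u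

/-- The extension of `V⁺_R(M)` to a family of subspaces over all of `X × Y`
(equal to `⋃_{s ∈ R, s ≤ u} ρ_s^u(V⁺_{R,s})` on the upset of `R` and `0` elsewhere). -/
noncomputable def VplusSub (M : PersistenceModule K (X × Y)) (l r : Cut X) (b t : Cut Y)
    (u : X × Y) : Submodule K (M.obj u) :=
  ⨆ (s : X × Y) (h : s ∈ rectOf l r b t ∧ s ≤ u),
    Submodule.map (rho K M h.2) (VplusAt K M l r b t s)

/-- The extension of `V⁻_R(M)` to a family of subspaces over all of `X × Y`. -/
noncomputable def VminusSub (M : PersistenceModule K (X × Y)) (l r : Cut X) (b t : Cut Y)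
    (u : X × Y) : Submodule K (M.obj u) :=
  ⨆ (s : X × Y) (h : s ∈ rectOf l r b t ∧ s ≤ u),
    Submodule.map (rho K M h.2) (VminusAt K M l r b t s)

theorem rho_comp {P : Type} [Preorder P] (M : PersistenceModule K P) {p q r : P}
    (h1 : p ≤ q) (h2 : q ≤ r) :
    (rho K M h2).comp (rho K M h1) = rho K M (h1.trans h2) := by
  rw [rho, rho, rho, ← homOfLE_comp h1 h2, M.map_comp]
  rfl

/-- The subfunctor of a persistence module determined by a compatible family of subspaces. -/
noncomputable def subfunctor {P : Type} [Preorder P] (M : PersistenceModule K P)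
    (S : ∀ p, Submodule K (M.obj p))
    (hS : ∀ (p q : P) (h : p ≤ q), (S p).map (rho K M h) ≤ S q) :
    PersistenceModule K P where
  obj p := ModuleCat.of K ↥(S p)
  map {p q} f := ModuleCat.ofHom
    ((rho K M (leOfHom f)).restrict
      (p := S p) (q := S q) (fun x hx => hS p q (leOfHom f) ⟨x, hx, rfl⟩))
  map_id p := by
    refine ModuleCat.hom_ext (LinearMap.ext fun x => Subtype.ext ?_)
    show (M.map (𝟙 p)).hom x.1 = x.1
    rw [M.map_id]
    rfl
  map_comp {p q r} f g := by
    refine ModuleCat.hom_ext (LinearMap.ext fun x => Subtype.ext ?_)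
    show (M.map (homOfLE ((leOfHom f).trans (leOfHom g)))).hom x.1 =
      (M.map (homOfLE (leOfHom g))).hom ((M.map (homOfLE (leOfHom f))).hom x.1)
    rw [← homOfLE_comp (leOfHom f) (leOfHom g), M.map_comp]
    rfl

theorem vplusSub_mapsTo (M : PersistenceModule K (X × Y)) (l r : Cut X) (b t : Cut Y) :
    ∀ (p q : X × Y) (h : p ≤ q),
      Submodule.map (rho K M h) (VplusSub K M l r b t p) ≤ VplusSub K M l r b t q := by
  intro p q h
  rw [VplusSub, Submodule.map_iSup]
  refine iSup_le fun s => ?_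
  rw [Submodule.map_iSup]
  refine iSup_le fun hs => ?_
  rw [← Submodule.map_comp, rho_comp K M hs.2 h]
  exact le_iSup_of_le s (le_iSup_of_le ⟨hs.1, hs.2.trans h⟩ le_rfl)

theorem vminusSub_mapsTo (M : PersistenceModule K (X × Y)) (l r : Cut X) (b t : Cut Y) :
    ∀ (p q : X × Y) (h : p ≤ q),
      Submodule.map (rho K M h) (VminusSub K M l r b t p) ≤ VminusSub K M l r b t q := by
  intro p q h
  rw [VminusSub, Submodule.map_iSup]
  refine iSup_le fun s => ?_
  rw [Submodule.map_iSup]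
  refine iSup_le fun hs => ?_
  rw [← Submodule.map_comp, rho_comp K M hs.2 h]
  exact le_iSup_of_le s (le_iSup_of_le ⟨hs.1, hs.2.trans h⟩ le_rfl)

/-- The submodule `V⁺_R(M)` of `M`, as a persistence module. -/
noncomputable def VplusMod (M : PersistenceModule K (X × Y)) (l r : Cut X) (b t : Cut Y) :
    PersistenceModule K (X × Y) :=
  subfunctor K M (VplusSub K M l r b t) (vplusSub_mapsTo K M l r b t)

/-- The submodule `V⁻_R(M)` of `M`, as a persistence module. -/
noncomputable def VminusMod (M : PersistenceModule K (X × Y)) (l r : Cut X) (b t : Cut Y) :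
    PersistenceModule K (X × Y) :=
  subfunctor K M (VminusSub K M l r b t) (vminusSub_mapsTo K M l r b t)

/-- The relation `R' σ R` on rectangles, expressed on cut decompositions. -/
def SigmaRel (l' r' : Cut X) (b' t' : Cut Y) (l r : Cut X) (b t : Cut Y) : Prop :=
  l'.lower ⊆ l.lower ∧ b'.lower ⊆ b.lower ∧
    (r'.lower ⊂ r.lower ∨ t'.lower ⊂ t.lower ∨
      (r'.lower ⊆ r.lower ∧ t'.lower ⊆ t.lower))

/-- The relation `R' σ̊ R`: `R' σ R` and `R' ≠ R`. -/
def SigmaRelStrict (l' r' : Cut X) (b' t' : Cut Y) (l r : Cut X) (b t : Cut Y) : Prop :=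
  SigmaRel l' r' b' t' l r b t ∧ rectOf l' r' b' t' ≠ rectOf l r b t

/-- The interval (indicator) module of a single convex set. -/
noncomputable abbrev singleIntervalModule {P : Type} [Preorder P] (S : Set P)
    (hS : IsConvexSet S) : PersistenceModule K P :=
  intervalDirectSum K (fun _ : PUnit => S) (fun _ => hS)

/-! ## Inverse limits of the filtration, counting functor, rectangle filtrates -/

/-- The submodule of compatible sections of a persistence module over a subset of the poset
(the inverse limit of the corresponding restricted system). -/
noncomputable def compatSections {P : Type} [Preorder P] (M : PersistenceModule K P)
    (A : Set P) : Submodule K (∀ u : A, M.obj u.1) where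
  carrier := {v | ∀ (s u : A) (h : s.1 ≤ u.1), rho K M h (v s) = v u}
  add_mem' := by
    intro v w hv hw s u h
    show rho K M h (v s + w s) = v u + w u
    rw [map_add, hv s u h, hw s u h]
  zero_mem' := by
    intro s u h
    show rho K M h 0 = 0
    rw [map_zero]
  smul_mem' := by
    intro c v hv s u h
    show rho K M h (c • v s) = c • v u
    rw [map_smul, hv s u h]

/-- The projection from sections over `A` to the value at a point `u ∈ A`. -/
noncomputable def projAt {P : Type} [Preorder P] (M : PersistenceModule K P)
    (A : Set P) (u : P) (h : u ∈ A) : (∀ v : A, M.obj v.1) →ₗ[K] M.obj u :=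
  LinearMap.proj (⟨u, h⟩ : A)

variable {X Y : Type} [LinearOrder X] [LinearOrder Y]

/-- `L⁺ = lim_{u ∈ R} V⁺_{R,u}(M)`, realized as the compatible sections valued in the
pointwise filtration spaces. -/
noncomputable def limVplus (M : PersistenceModule K (X × Y)) (l r : Cut X) (b t : Cut Y) :
    Submodule K (∀ v : ↥(rectOf l r b t), M.obj v.1) :=
  compatSections K M (rectOf l r b t) ⊓
    Submodule.pi Set.univ (fun v : ↥(rectOf l r b t) => VplusAt K M l r b t v.1)

/-- `L⁻ = ⋂_{u ∈ R} π_u⁻¹(V⁻_{R,u}(M))` inside `L⁺`. -/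
noncomputable def limVminus (M : PersistenceModule K (X × Y)) (l r : Cut X) (b t : Cut Y) :
    Submodule K (∀ v : ↥(rectOf l r b t), M.obj v.1) :=
  limVplus K M l r b t ⊓
    Submodule.pi Set.univ (fun v : ↥(rectOf l r b t) => VminusAt K M l r b t v.1)

/-- The family of subspaces of `M` obtained by projecting a subspace `W` of the sections over
`A`: `u ↦ π_u(W)` for `u ∈ A`, and `0` elsewhere. -/
noncomputable def filtrateFam {P : Type} [Preorder P] (M : PersistenceModule K P) (A : Set P)
    (W : Submodule K (∀ v : A, M.obj v.1)) (u : P) : Submodule K (M.obj u) :=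
  ⨆ (h : u ∈ A), Submodule.map (projAt K M A u h) W

/-- `V⁻_{R,u}(M)` viewed as a submodule of `V⁺_{R,u}(M)`. -/
noncomputable def VminusIn (M : PersistenceModule K (X × Y)) (l r : Cut X) (b t : Cut Y)
    (u : X × Y) : Submodule K ↥(VplusAt K M l r b t u) :=
  Submodule.comap (VplusAt K M l r b t u).subtype (VminusAt K M l r b t u)

/-- The counting functor `C_R(M) = lim_{u ∈ R} V⁺_{R,u}(M) / V⁻_{R,u}(M)`, realized as the
submodule of families of cosets that are compatible under the induced transition maps. -/
noncomputable def countingSpace (M : PersistenceModule K (X × Y)) (l r : Cut X) (b t : Cut Y) :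
    Submodule K (∀ v : ↥(rectOf l r b t),
      (↥(VplusAt K M l r b t v.1) ⧸ VminusIn K M l r b t v.1)) where
  carrier := {q | ∀ (s u : ↥(rectOf l r b t)) (h : s.1 ≤ u.1),
    ∃ w : ↥(VplusAt K M l r b t s.1),
      Submodule.Quotient.mk w = q s ∧
      ∃ hw : rho K M h w.1 ∈ VplusAt K M l r b t u.1,
        Submodule.Quotient.mk (⟨rho K M h w.1, hw⟩ : ↥(VplusAt K M l r b t u.1)) = q u}
  zero_mem' := by
    intro s u h
    have hmem : rho K M h ((0 : ↥(VplusAt K M l r b t s.1)) : M.obj s.1) ∈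
        VplusAt K M l r b t u.1 := by
      rw [Submodule.coe_zero, map_zero]
      exact (VplusAt K M l r b t u.1).zero_mem
    refine ⟨0, by simp, hmem, ?_⟩
    have heq : (⟨rho K M h ((0 : ↥(VplusAt K M l r b t s.1)) : M.obj s.1), hmem⟩ :
        ↥(VplusAt K M l r b t u.1)) = 0 := by
      ext
      show rho K M h ((0 : ↥(VplusAt K M l r b t s.1)) : M.obj s.1) = (0 : M.obj u.1)
      rw [Submodule.coe_zero, map_zero]
    rw [heq]
    simp
  add_mem' := by
    intro q1 q2 hq1 hq2 s u h
    obtain ⟨w1, hw1, hmem1, hval1⟩ := hq1 s u h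
    obtain ⟨w2, hw2, hmem2, hval2⟩ := hq2 s u h
    have hmem : rho K M h ((w1 + w2 : ↥(VplusAt K M l r b t s.1)) : M.obj s.1) ∈
        VplusAt K M l r b t u.1 := by
      rw [Submodule.coe_add, map_add]
      exact (VplusAt K M l r b t u.1).add_mem hmem1 hmem2
    refine ⟨w1 + w2, ?_, hmem, ?_⟩
    · rw [Submodule.Quotient.mk_add, hw1, hw2]
      rfl
    · have heq : (⟨rho K M h ((w1 + w2 : ↥(VplusAt K M l r b t s.1)) : M.obj s.1), hmem⟩ :
          ↥(VplusAt K M l r b t u.1)) =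
          (⟨rho K M h w1.1, hmem1⟩ : ↥(VplusAt K M l r b t u.1)) +
          (⟨rho K M h w2.1, hmem2⟩ : ↥(VplusAt K M l r b t u.1)) := by
        ext
        show rho K M h ((w1 + w2 : ↥(VplusAt K M l r b t s.1)) : M.obj s.1) =
          rho K M h (w1 : M.obj s.1) + rho K M h (w2 : M.obj s.1)
        rw [Submodule.coe_add, map_add]
      rw [heq, Submodule.Quotient.mk_add, hval1, hval2]
      rfl
  smul_mem' := by
    intro c q hq s u h
    obtain ⟨w, hw, hmem, hval⟩ := hq s u h
    have hmem' : rho K M h ((c • w : ↥(VplusAt K M l r b t s.1)) : M.obj s.1) ∈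
        VplusAt K M l r b t u.1 := by
      rw [Submodule.coe_smul, map_smul]
      exact (VplusAt K M l r b t u.1).smul_mem c hmem
    refine ⟨c • w, ?_, hmem', ?_⟩
    · rw [Submodule.Quotient.mk_smul, hw]
      rfl
    · have heq : (⟨rho K M h ((c • w : ↥(VplusAt K M l r b t s.1)) : M.obj s.1), hmem'⟩ :
          ↥(VplusAt K M l r b t u.1)) =
          c • (⟨rho K M h w.1, hmem⟩ : ↥(VplusAt K M l r b t u.1)) := by
        ext
        show rho K M h ((c • w : ↥(VplusAt K M l r b t s.1)) : M.obj s.1) =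
          c • rho K M h (w : M.obj s.1)
        rw [Submodule.coe_smul, map_smul]
      rw [heq, Submodule.Quotient.mk_smul, hval]
      rfl

/-- The data of a rectangle filtrate of `M` for the rectangle determined by four cuts:
a choice of complement `W` of `L⁻` in `L⁺` computed inside the submodule `N = V⁺_R(M)`,
chosen inside `lim_{u∈R} (Ker⁺_{r,u}(N) ∩ Ker⁺_{t,u}(N))`. -/
structure RectangleFiltrate (M : PersistenceModule K (X × Y))
    (l r : Cut X) (b t : Cut Y) where
  W : Submodule K (∀ v : ↥(rectOf l r b t), (VplusMod K M l r b t).obj v.1)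
  le_lim : W ≤ limVplus K (VplusMod K M l r b t) l r b t
  le_ker : W ≤ Submodule.pi Set.univ (fun v : ↥(rectOf l r b t) =>
    KerPlusH K (VplusMod K M l r b t) r v.1 ⊓ KerPlusV K (VplusMod K M l r b t) t v.1)
  inf_eq : W ⊓ limVminus K (VplusMod K M l r b t) l r b t = ⊥
  sup_eq : W ⊔ limVminus K (VplusMod K M l r b t) l r b t =
    limVplus K (VplusMod K M l r b t) l r b t

/-- The subspace of `M` at index `u` determined by a rectangle filtrate (`π_u(W)` for
`u ∈ R` and `0` elsewhere, viewed inside `M` via the inclusion `V⁺_R(M) ⊆ M`). -/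
noncomputable def RectangleFiltrate.atPoint {M : PersistenceModule K (X × Y)}
    {l r : Cut X} {b t : Cut Y} (F : RectangleFiltrate K M l r b t) (u : X × Y) :
    Submodule K (M.obj u) :=
  Submodule.map (VplusSub K M l r b t u).subtype
    (filtrateFam K (VplusMod K M l r b t) (rectOf l r b t) F.W u)

/-!
Evaluation at any point of `R` is injective on `W`: by weak exactness, a section of `L⁺` vanishing
at `u₀` has its value at `v ⊓ u₀` in `Ker⁻_R`, hence lies in `L⁻`, and `W ∩ L⁻ = 0`. So the
values of a basis of `W` identify `M_R` with `k_R^{dim W}`. As `W` is a complement of `L⁻` in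
`L⁺`, `dim W = dim (L⁺/L⁻)`, and `L⁺/L⁻ ≅ C_R(M)` because `L⁺ → C_R(M)` is onto: the fibres over
a compatible family of classes form a system of nonempty affine subspaces of finite-dimensional
spaces over the codirected set `R`, and such a system has a compatible section.
-/

theorem AffineSubspace.exists_forall_le_of_directed_ge {K V ι : Type} [DivisionRing K]
    [AddCommGroup V] [Module K V] [FiniteDimensional K V] [Nonempty ι] (A : ι → AffineSubspace K V)
    (hne : ∀ i, (A i : Set V).Nonempty) (hdir : Directed (· ≥ ·) A) :
    ∃ i, ∀ j, A i ≤ A j := by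
  let d := fun i => Module.finrank K (A i).direction
  refine ⟨Function.argmin d, fun j => ?_⟩
  obtain ⟨k, hki, hkj⟩ := hdir (Function.argmin d) j
  have hdir_eq : (A k).direction = (A (Function.argmin d)).direction :=
    Submodule.eq_of_le_of_finrank_le (AffineSubspace.direction_le hki)
      (Function.argmin_le d k)
  rwa [← AffineSubspace.eq_of_direction_eq_of_nonempty_of_le hdir_eq (hne k) hki]

section PersistenceModule

variable (K : Type) [Field K] {P : Type} [Preorder P] (M : PersistenceModule K P)

theorem rho_rho {p q r : P} (h1 : p ≤ q) (h2 : q ≤ r) (x : M.obj p) :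
    rho K M h2 (rho K M h1 x) = rho K M (h1.trans h2) x := by
  rw [← rho_comp K M h1 h2]; rfl

theorem rho_refl (p : P) (x : M.obj p) : rho K M (le_refl p) x = x := by
  change (M.map (𝟙 p)).hom x = x
  rw [M.map_id]; rfl

variable {K M}

theorem rho_mem_range_rho {s c u : P} (hsc : s ≤ c) (hcu : c ≤ u) (z : M.obj s) :
    rho K M (hsc.trans hcu) z ∈ LinearMap.range (rho K M hcu) :=
  ⟨rho K M hsc z, rho_rho K M hsc hcu z⟩

theorem map_range_rho_le {a s c u : P} (has : a ≤ s) (hac : a ≤ c) (hsu : s ≤ u) (hcu : c ≤ u) :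
    (LinearMap.range (rho K M has)).map (rho K M hsu) ≤ LinearMap.range (rho K M hcu) := by
  rintro _ ⟨_, ⟨z, rfl⟩, rfl⟩
  rw [rho_rho]
  exact rho_mem_range_rho hac hcu z

theorem ker_rho_le_ker_rho {s c d : P} (hsc : s ≤ c) (hcd : c ≤ d) :
    LinearMap.ker (rho K M hsc) ≤ LinearMap.ker (rho K M (hsc.trans hcd)) := fun z hz => by
  rw [LinearMap.mem_ker, ← rho_rho K M hsc hcd, LinearMap.mem_ker.1 hz, map_zero]

theorem map_ker_rho_le {s c u d : P} (hsc : s ≤ c) (hcd : c ≤ d) (hsu : s ≤ u) (hud : u ≤ d) :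
    (LinearMap.ker (rho K M hsc)).map (rho K M hsu) ≤ LinearMap.ker (rho K M hud) := by
  rintro _ ⟨z, hz, rfl⟩
  rw [LinearMap.mem_ker, rho_rho, ← rho_rho K M hsc hcd, LinearMap.mem_ker.1 hz, map_zero]

theorem map_ker_rho_eq_bot {s c u : P} (hsc : s ≤ c) (hcu : c ≤ u) :
    (LinearMap.ker (rho K M hsc)).map (rho K M (hsc.trans hcu)) = ⊥ := by
  rw [eq_bot_iff]
  rintro _ ⟨z, hz, rfl⟩
  rw [Submodule.mem_bot, ← rho_rho K M hsc hcu, LinearMap.mem_ker.1 hz, map_zero]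

end PersistenceModule

section AffineSystem

variable (K : Type) [Field K] {P : Type} [Preorder P] (M : PersistenceModule K P)

def IsAffineSystem (B : ∀ u, AffineSubspace K (M.obj u)) : Prop :=
  (∀ u, (B u : Set (M.obj u)).Nonempty) ∧
    ∀ ⦃s u : P⦄ (h : s ≤ u), ∀ x ∈ B s, rho K M h x ∈ B u

variable {K M}

theorem IsAffineSystem.iInf_of_isChain (hM : Pfd K M)
    {c : Set (∀ u, AffineSubspace K (M.obj u))} (hc : ∀ B ∈ c, IsAffineSystem K M B)
    (hchain : IsChain (· ≤ ·) c) (hne : c.Nonempty) :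
    IsAffineSystem K M (fun u => ⨅ B : c, B.1 u) := by
  have := hne.to_subtype
  refine ⟨fun u => ?_, fun s u h x hx => ?_⟩
  · have := hM u
    have hdir : Directed (· ≥ ·) (fun B : c => B.1 u) := fun B₁ B₂ =>
      (hchain.total B₁.2 B₂.2).elim (fun h => ⟨B₁, le_rfl, h u⟩) (fun h => ⟨B₂, h u, le_rfl⟩)
    obtain ⟨B₀, hB₀⟩ := AffineSubspace.exists_forall_le_of_directed_ge (fun B : c => B.1 u)
      (fun B => (hc B.1 B.2).1 u) hdir
    obtain ⟨x, hx⟩ := (hc B₀.1 B₀.2).1 u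
    exact ⟨x, (AffineSubspace.mem_iInf_iff _ _).2 fun B => hB₀ B hx⟩
  · rw [AffineSubspace.mem_iInf_iff] at hx ⊢
    exact fun B => (hc B.1 B.2).2 h x (hx B)

variable [IsCodirectedOrder P] {B : ∀ u, AffineSubspace K (M.obj u)}

/-- Mittag-Leffler: the images of the `B m` in `M u` stabilise by finite-dimensionality. -/
theorem IsAffineSystem.exists_forall_exists_rho_eq (hM : Pfd K M) (hB : IsAffineSystem K M B)
    (u : P) : ∃ x : M.obj u, ∀ m (hm : m ≤ u), ∃ z ∈ B m, rho K M hm z = x := by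
  have := hM u
  let F : {m // m ≤ u} → AffineSubspace K (M.obj u) := fun m =>
    (B m).map (rho K M m.2).toAffineMap
  have hF : ∀ m : {m // m ≤ u}, ∀ x, x ∈ F m ↔ ∃ z ∈ B m, rho K M m.2 z = x := fun m x =>
    AffineSubspace.mem_map
  have hdir : Directed (· ≥ ·) F := fun m₁ m₂ => by
    obtain ⟨m, hm₁, hm₂⟩ := exists_le_le m₁.1 m₂.1
    refine ⟨⟨m, hm₁.trans m₁.2⟩, ?_, ?_⟩ <;>
    · rintro x hx
      obtain ⟨z, hz, rfl⟩ := (hF _ x).1 hx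
      refine (hF _ _).2 ⟨_, hB.2 ‹_› z hz, ?_⟩
      rw [rho_rho]
  have : Nonempty {m // m ≤ u} := ⟨⟨u, le_rfl⟩⟩
  obtain ⟨m₀, hm₀⟩ := AffineSubspace.exists_forall_le_of_directed_ge F
    (fun m => (hB.1 m).image _) hdir
  obtain ⟨x, hx⟩ := (hB.1 m₀).image (rho K M m₀.2)
  exact ⟨x, fun m hm => (hF ⟨m, hm⟩ x).1 (hm₀ ⟨m, hm⟩ ((hF m₀ x).2 hx))⟩

theorem IsAffineSystem.pin (hB : IsAffineSystem K M B) {u : P} {x : M.obj u}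
    (hx : ∀ m (hm : m ≤ u), ∃ z ∈ B m, rho K M hm z = x) :
    IsAffineSystem K M fun v => B v ⊓ ⨅ (w : P) (h : v ≤ w ∧ u ≤ w),
      (affineSpan K {rho K M h.2 x}).comap (rho K M h.1).toAffineMap := by
  refine ⟨fun v => ?_, fun s v h y hy => ?_⟩
  · obtain ⟨m, hmu, hmv⟩ := exists_le_le u v
    obtain ⟨z, hz, rfl⟩ := hx m hmu
    refine ⟨rho K M hmv z, ?_⟩
    simp only [SetLike.mem_coe, AffineSubspace.mem_inf_iff, AffineSubspace.mem_iInf_iff,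
      AffineSubspace.mem_comap, LinearMap.coe_toAffineMap,
      AffineSubspace.mem_affineSpan_singleton]
    refine ⟨hB.2 hmv z hz, fun w hw => ?_⟩
    rw [rho_rho, rho_rho]
  · simp only [AffineSubspace.mem_inf_iff, AffineSubspace.mem_iInf_iff,
      AffineSubspace.mem_comap, LinearMap.coe_toAffineMap,
      AffineSubspace.mem_affineSpan_singleton] at hy ⊢
    refine ⟨hB.2 h y hy.1, fun w hw => ?_⟩
    rw [rho_rho]
    exact hy.2 w ⟨h.trans hw.1, hw.2⟩

/-- Pinning a minimal system at a stable point of `B u` gives a smaller system whose value at `u`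
is that point. -/
theorem IsAffineSystem.subsingleton_of_minimal (hM : Pfd K M) (hB : IsAffineSystem K M B)
    (hmin : ∀ B', IsAffineSystem K M B' → B' ≤ B → B ≤ B') (u : P) :
    (B u : Set (M.obj u)).Subsingleton := by
  obtain ⟨x, hx⟩ := hB.exists_forall_exists_rho_eq hM u
  have hpin := hmin _ (hB.pin hx) fun v => inf_le_left
  suffices ∀ y ∈ B u, y = x from fun y hy y' hy' => (this y hy).trans (this y' hy').symm
  intro y hy
  have hy' := hpin u hy
  simp only [AffineSubspace.mem_inf_iff, AffineSubspace.mem_iInf_iff, AffineSubspace.mem_comap,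
    LinearMap.coe_toAffineMap, AffineSubspace.mem_affineSpan_singleton] at hy'
  simpa only [rho_refl] using hy'.2 u ⟨le_rfl, le_rfl⟩

/-- A minimal affine subsystem, given by Zorn's lemma, consists of points. -/
theorem IsAffineSystem.exists_compatible (hM : Pfd K M) {A : ∀ u, AffineSubspace K (M.obj u)}
    (hA : IsAffineSystem K M A) :
    ∃ f : ∀ u, M.obj u, (∀ u, f u ∈ A u) ∧ ∀ ⦃s u : P⦄ (h : s ≤ u), rho K M h (f s) = f u := by
  obtain ⟨B, hBA, hBmin⟩ := zorn_le_nonempty₀ (α := (∀ u, AffineSubspace K (M.obj u))ᵒᵈ)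
    {B | IsAffineSystem K M (OrderDual.ofDual B)}
    (fun c hc hchain B hB => ⟨_, IsAffineSystem.iInf_of_isChain hM hc hchain.symm ⟨B, hB⟩,
      fun B' hB' u => iInf_le (fun B'' : c => B''.1 u) ⟨B', hB'⟩⟩)
    (OrderDual.toDual A) hA
  have hB : IsAffineSystem K M B := hBmin.1
  have hsub := hB.subsingleton_of_minimal hM fun B' hB' hle => hBmin.2 hB' hle
  choose f hf using hB.1
  exact ⟨f, fun u => hBA u (hf u), fun s u h => hsub u (hB.2 h _ (hf s)) (hf u)⟩

end AffineSystem

section Filtration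

variable {K : Type} [Field K] {X Y : Type} [LinearOrder X] [LinearOrder Y]
  {M : PersistenceModule K (X × Y)} {s u : X × Y} (h : s ≤ u)

theorem map_ImPlusH_le (l : Cut X) : (ImPlusH K M l s).map (rho K M h) ≤ ImPlusH K M l u := by
  rintro _ ⟨z, hz, rfl⟩
  simp only [ImPlusH, SetLike.mem_coe, Submodule.mem_iInf] at hz ⊢
  rintro x ⟨hxl, hxu⟩
  rcases le_or_gt x s.1 with hxs | hsx
  · exact map_range_rho_le _ (show ((x, s.2) : X × Y) ≤ (x, u.2) from ⟨le_rfl, h.2⟩) _ _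
      ⟨z, hz x ⟨hxl, hxs⟩, rfl⟩
  · exact rho_mem_range_rho (show s ≤ ((x, u.2) : X × Y) from ⟨hsx.le, h.2⟩) _ z

theorem map_ImPlusV_le (b : Cut Y) : (ImPlusV K M b s).map (rho K M h) ≤ ImPlusV K M b u := by
  rintro _ ⟨z, hz, rfl⟩
  simp only [ImPlusV, SetLike.mem_coe, Submodule.mem_iInf] at hz ⊢
  rintro y ⟨hyb, hyu⟩
  rcases le_or_gt y s.2 with hys | hsy
  · exact map_range_rho_le _ (show ((s.1, y) : X × Y) ≤ (u.1, y) from ⟨h.1, le_rfl⟩) _ _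
      ⟨z, hz y ⟨hyb, hys⟩, rfl⟩
  · exact rho_mem_range_rho (show s ≤ ((u.1, y) : X × Y) from ⟨h.1, hsy.le⟩) _ z

theorem map_ImMinusH_le (l : Cut X) : (ImMinusH K M l s).map (rho K M h) ≤ ImMinusH K M l u := by
  simp only [ImMinusH, Submodule.map_iSup]
  refine iSup₂_le fun x ⟨hxl, hxs⟩ => le_iSup₂_of_le x ⟨hxl, hxs.trans h.1⟩ ?_
  exact map_range_rho_le _ (show ((x, s.2) : X × Y) ≤ (x, u.2) from ⟨le_rfl, h.2⟩) _ _

theorem map_ImMinusV_le (b : Cut Y) : (ImMinusV K M b s).map (rho K M h) ≤ ImMinusV K M b u := by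
  simp only [ImMinusV, Submodule.map_iSup]
  refine iSup₂_le fun y ⟨hyb, hys⟩ => le_iSup₂_of_le y ⟨hyb, hys.trans h.2⟩ ?_
  exact map_range_rho_le _ (show ((s.1, y) : X × Y) ≤ (u.1, y) from ⟨h.1, le_rfl⟩) _ _

theorem map_KerPlusH_le (r : Cut X) : (KerPlusH K M r s).map (rho K M h) ≤ KerPlusH K M r u := by
  rintro _ ⟨z, hz, rfl⟩
  simp only [KerPlusH, SetLike.mem_coe, Submodule.mem_iInf] at hz ⊢
  rintro x ⟨hxr, hux⟩
  exact map_ker_rho_le _ (show ((x, s.2) : X × Y) ≤ (x, u.2) from ⟨le_rfl, h.2⟩) _ _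
    ⟨z, hz x ⟨hxr, h.1.trans hux⟩, rfl⟩

theorem map_KerPlusV_le (t : Cut Y) : (KerPlusV K M t s).map (rho K M h) ≤ KerPlusV K M t u := by
  rintro _ ⟨z, hz, rfl⟩
  simp only [KerPlusV, SetLike.mem_coe, Submodule.mem_iInf] at hz ⊢
  rintro y ⟨hyt, huy⟩
  exact map_ker_rho_le _ (show ((s.1, y) : X × Y) ≤ (u.1, y) from ⟨h.1, le_rfl⟩) _ _
    ⟨z, hz y ⟨hyt, h.2.trans huy⟩, rfl⟩

theorem map_KerMinusH_le (r : Cut X) :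
    (KerMinusH K M r s).map (rho K M h) ≤ KerMinusH K M r u := by
  simp only [KerMinusH, Submodule.map_iSup]
  refine iSup₂_le fun x ⟨hxr, hsx⟩ => ?_
  rcases le_or_gt u.1 x with hux | hxu
  · exact le_iSup₂_of_le x ⟨hxr, hux⟩ <|
      map_ker_rho_le _ (show ((x, s.2) : X × Y) ≤ (x, u.2) from ⟨le_rfl, h.2⟩) _ _
  · rw [map_ker_rho_eq_bot _ (show ((x, s.2) : X × Y) ≤ u from ⟨hxu.le, h.2⟩)]
    exact bot_le

theorem map_KerMinusV_le (t : Cut Y) :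
    (KerMinusV K M t s).map (rho K M h) ≤ KerMinusV K M t u := by
  simp only [KerMinusV, Submodule.map_iSup]
  refine iSup₂_le fun y ⟨hyt, hsy⟩ => ?_
  rcases le_or_gt u.2 y with huy | hyu
  · exact le_iSup₂_of_le y ⟨hyt, huy⟩ <|
      map_ker_rho_le _ (show ((s.1, y) : X × Y) ≤ (u.1, y) from ⟨h.1, le_rfl⟩) _ _
  · rw [map_ker_rho_eq_bot _ (show ((s.1, y) : X × Y) ≤ u from ⟨h.1, hyu.le⟩)]
    exact bot_le

variable (l r : Cut X) (b t : Cut Y)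

theorem map_ImPlusR_le : (ImPlusR K M l b s).map (rho K M h) ≤ ImPlusR K M l b u :=
  (Submodule.map_inf_le _).trans (inf_le_inf (map_ImPlusH_le h l) (map_ImPlusV_le h b))

theorem map_ImMinusR_le : (ImMinusR K M l b s).map (rho K M h) ≤ ImMinusR K M l b u := by
  refine (Submodule.map_inf_le _).trans (inf_le_inf ?_ (map_ImPlusR_le h l b))
  rw [Submodule.map_sup]
  exact sup_le_sup (map_ImMinusH_le h l) (map_ImMinusV_le h b)

theorem map_KerPlusR_le : (KerPlusR K M r t s).map (rho K M h) ≤ KerPlusR K M r t u := by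
  refine (Submodule.map_inf_le _).trans (inf_le_inf ?_ ?_) <;> rw [Submodule.map_sup]
  · exact sup_le_sup (map_KerPlusH_le h r) (map_KerMinusV_le h t)
  · exact sup_le_sup (map_KerMinusH_le h r) (map_KerPlusV_le h t)

theorem map_KerMinusR_le : (KerMinusR K M r t s).map (rho K M h) ≤ KerMinusR K M r t u := by
  rw [KerMinusR, Submodule.map_sup]
  exact sup_le_sup (map_KerMinusH_le h r) (map_KerMinusV_le h t)

theorem map_VminusAt_le : (VminusAt K M l r b t s).map (rho K M h) ≤ VminusAt K M l r b t u := by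
  rw [VminusAt, Submodule.map_sup]
  exact sup_le_sup
    ((Submodule.map_inf_le _).trans (inf_le_inf (map_ImPlusR_le h l b) (map_KerMinusR_le h r t)))
    ((Submodule.map_inf_le _).trans (inf_le_inf (map_ImMinusR_le h l b) (map_KerPlusR_le h r t)))

end Filtration

section Rectangle

variable {K : Type} [Field K] {X Y : Type} [LinearOrder X] [LinearOrder Y]
  {M : PersistenceModule K (X × Y)} {l r : Cut X} {b t : Cut Y}

theorem inf_mem_rectOf {u v : X × Y} (hu : u ∈ rectOf l r b t) (hv : v ∈ rectOf l r b t) :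
    u ⊓ v ∈ rectOf l r b t :=
  ⟨min_rec' (· ∈ l.upper ∩ r.lower) hu.1 hv.1, min_rec' (· ∈ b.upper ∩ t.lower) hu.2 hv.2⟩

instance : IsCodirectedOrder (rectOf l r b t) :=
  ⟨fun u v => ⟨⟨u.1 ⊓ v.1, inf_mem_rectOf u.2 v.2⟩,
    (inf_le_left : u.1 ⊓ v.1 ≤ u.1), (inf_le_right : u.1 ⊓ v.1 ≤ v.1)⟩⟩

theorem KerMinusH_le_KerPlusH (u : X × Y) : KerMinusH K M r u ≤ KerPlusH K M r u :=
  iSup₂_le fun x ⟨hxr, hux⟩ => le_iInf₂ fun x' ⟨hx'r, _⟩ =>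
    ker_rho_le_ker_rho (show u ≤ ((x, u.2) : X × Y) from ⟨hux, le_rfl⟩)
      (show ((x, u.2) : X × Y) ≤ (x', u.2) from ⟨(r.lt x hxr x' hx'r).le, le_rfl⟩)

theorem KerMinusV_le_KerPlusV (u : X × Y) : KerMinusV K M t u ≤ KerPlusV K M t u :=
  iSup₂_le fun y ⟨hyt, huy⟩ => le_iInf₂ fun y' ⟨hy't, _⟩ =>
    ker_rho_le_ker_rho (show u ≤ ((u.1, y) : X × Y) from ⟨le_rfl, huy⟩)
      (show ((u.1, y) : X × Y) ≤ (u.1, y') from ⟨le_rfl, (t.lt y hyt y' hy't).le⟩)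

theorem KerMinusR_le_KerPlusR (u : X × Y) : KerMinusR K M r t u ≤ KerPlusR K M r t u :=
  sup_le (le_inf (le_sup_of_le_left (KerMinusH_le_KerPlusH u)) le_sup_left)
    (le_inf le_sup_right (le_sup_of_le_right (KerMinusV_le_KerPlusV u)))

theorem VminusAt_le_VplusAt (u : X × Y) : VminusAt K M l r b t u ≤ VplusAt K M l r b t u :=
  sup_le (inf_le_inf le_rfl (KerMinusR_le_KerPlusR u)) (inf_le_inf inf_le_right le_rfl)

/-- At the meet `m = v ⊓ u₀`, weak exactness gives `Ker ρ_m^{u₀} ⊆ Ker⁻_{r,m} + Ker⁻_{t,m}`;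
then push forward from `m` to `v`. -/
theorem mem_limVminus_of_apply_eq_zero (hwe : WeaklyExact K M)
    {w : ∀ v : rectOf l r b t, M.obj v.1} (hw : w ∈ limVplus K M l r b t)
    (u₀ : rectOf l r b t) (h0 : w u₀ = 0) : w ∈ limVminus K M l r b t := by
  refine ⟨hw, fun v _ => ?_⟩
  let m : rectOf l r b t := ⟨v.1 ⊓ u₀.1, inf_mem_rectOf v.2 u₀.2⟩
  have hmv : m.1 ≤ v.1 := inf_le_left
  have hmu : m.1 ≤ u₀.1 := inf_le_right
  have hker : w m ∈ LinearMap.ker (rho K M hmu) := by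
    rw [LinearMap.mem_ker, hw.1 m u₀ hmu, h0]
  rw [(hwe m.1 u₀.1 hmu).2] at hker
  have hle : _ ⊔ _ ≤ KerMinusR K M r t m.1 :=
    sup_le_sup (le_iSup₂_of_le u₀.1.1 ⟨u₀.2.1.2, hmu.1⟩ le_rfl)
      (le_iSup₂_of_le u₀.1.2 ⟨u₀.2.2.2, hmu.2⟩ le_rfl)
  have hKm : w m ∈ KerMinusR K M r t m.1 := hle hker
  have hVm : w m ∈ VminusAt K M l r b t m.1 :=
    le_sup_left (a := ImPlusR K M l b m.1 ⊓ KerMinusR K M r t m.1) ⟨(hw.2 m trivial).1, hKm⟩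
  rw [← hw.1 m v hmv]
  exact map_VminusAt_le hmv l r b t ⟨_, hVm, rfl⟩

theorem eq_zero_of_mem_of_apply_eq_zero (hwe : WeaklyExact K M)
    {W : Submodule K (∀ v : rectOf l r b t, M.obj v.1)} (hWle : W ≤ limVplus K M l r b t)
    (hWinf : W ⊓ limVminus K M l r b t = ⊥) {w : ∀ v : rectOf l r b t, M.obj v.1} (hw : w ∈ W)
    (u₀ : rectOf l r b t) (h0 : w u₀ = 0) : w = 0 :=
  (Submodule.mem_bot K).1 <| hWinf ▸ ⟨hw, mem_limVminus_of_apply_eq_zero hwe (hWle hw) u₀ h0⟩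

variable (K M l r b t)

theorem limVplus_apply_mem {w : ∀ v : rectOf l r b t, M.obj v.1}
    (hw : w ∈ limVplus K M l r b t) (v : rectOf l r b t) : w v ∈ VplusAt K M l r b t v.1 :=
  hw.2 v trivial

noncomputable def toCounting : limVplus K M l r b t →ₗ[K] countingSpace K M l r b t :=
  LinearMap.codRestrict _
    (LinearMap.pi fun v => (VminusIn K M l r b t v.1).mkQ ∘ₗ
      LinearMap.codRestrict _
        ((LinearMap.proj v : (∀ v : rectOf l r b t, M.obj v.1) →ₗ[K] M.obj v.1) ∘ₗ
          (limVplus K M l r b t).subtype)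
        fun w => limVplus_apply_mem K M l r b t w.2 v)
    fun w s u h => ⟨_, rfl, w.2.1 s u h ▸ limVplus_apply_mem K M l r b t w.2 u,
      congrArg Submodule.Quotient.mk (Subtype.ext (w.2.1 s u h))⟩

variable {K M l r b t}

theorem toCounting_apply (w : limVplus K M l r b t) (v : rectOf l r b t) :
    (toCounting K M l r b t w).1 v =
      Submodule.Quotient.mk ⟨w.1 v, limVplus_apply_mem K M l r b t w.2 v⟩ :=
  rfl

theorem toCounting_eq_zero_iff (w : limVplus K M l r b t) :
    toCounting K M l r b t w = 0 ↔ w.1 ∈ limVminus K M l r b t := by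
  rw [← Submodule.coe_eq_zero, funext_iff]
  simp only [toCounting_apply, Pi.zero_apply, Submodule.Quotient.mk_eq_zero]
  exact ⟨fun h => ⟨w.2, fun v _ => h v⟩, fun h v => h.2 v trivial⟩

theorem sub_mem_VminusAt_of_mk_eq {u : X × Y} {a a' : VplusAt K M l r b t u}
    (h : (Submodule.Quotient.mk a : _ ⧸ VminusIn K M l r b t u) = Submodule.Quotient.mk a') :
    a.1 - a'.1 ∈ VminusAt K M l r b t u :=
  (Submodule.Quotient.eq (VminusIn K M l r b t u)).1 h

/-- The fibres of `V⁺_{R,u} → V⁺_{R,u}/V⁻_{R,u}` over a compatible family of classes form an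
affine system; a compatible section through it is a preimage in `L⁺`. -/
theorem toCounting_surjective (hM : Pfd K M) :
    Function.Surjective (toCounting K M l r b t) := by
  intro q
  choose rep hrep using fun v => Submodule.Quotient.mk_surjective _ (q.1 v)
  let A : ∀ v : rectOf l r b t, AffineSubspace K (M.obj v.1) := fun v =>
    AffineSubspace.mk' (rep v).1 (VminusAt K M l r b t v.1)
  have hA : IsAffineSystem K (restrictMod K M (rectOf l r b t)) A := by
    refine ⟨fun v => ⟨_, AffineSubspace.self_mem_mk' _ _⟩, fun s u h (x : M.obj s.1) hx => ?_⟩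
    obtain ⟨w, hws, hwu, hwu'⟩ := q.2 s u h
    replace hx : x - (rep s).1 ∈ VminusAt K M l r b t s.1 := AffineSubspace.mem_mk'.1 hx
    refine AffineSubspace.mem_mk'.2 (?_ : rho K M h x - (rep u).1 ∈ _)
    have hxw : x - w.1 ∈ VminusAt K M l r b t s.1 := by
      simpa using Submodule.sub_mem _ hx (sub_mem_VminusAt_of_mk_eq (hws.trans (hrep s).symm))
    have hmap := map_VminusAt_le (M := M) h l r b t ⟨_, hxw, rfl⟩
    rw [map_sub] at hmap
    simpa using Submodule.add_mem _ hmap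
      (sub_mem_VminusAt_of_mk_eq (a := ⟨_, hwu⟩) (hwu'.trans (hrep u).symm))
  obtain ⟨f, hfA, hfc⟩ : ∃ f : ∀ v : rectOf l r b t, M.obj v.1, (∀ v, f v ∈ A v) ∧
      ∀ ⦃s u : rectOf l r b t⦄ (h : s.1 ≤ u.1), rho K M h (f s) = f u :=
    hA.exists_compatible fun v => hM v.1
  replace hfA : ∀ v, f v - (rep v).1 ∈ VminusAt K M l r b t v.1 := fun v =>
    AffineSubspace.mem_mk'.1 (hfA v)
  have hfV : ∀ v, f v ∈ VplusAt K M l r b t v.1 := fun v => by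
    simpa using Submodule.add_mem _ (VminusAt_le_VplusAt v.1 (hfA v)) (rep v).2
  refine ⟨⟨f, fun s u h => hfc h, fun v _ => hfV v⟩, Subtype.ext (funext fun v => ?_)⟩
  rw [toCounting_apply, ← hrep v]
  exact (Submodule.Quotient.eq _).2 (hfA v)

end Rectangle

theorem bijective_comp_inclusion_of_sup_eq_of_inf_eq_bot {R E Q : Type} [Ring R] [AddCommGroup E]
    [Module R E] [AddCommGroup Q] [Module R Q] {U W L : Submodule R E} (f : U →ₗ[R] Q)
    (hf : Function.Surjective f) (hker : ∀ x, f x = 0 ↔ x.1 ∈ L) (hWU : W ≤ U)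
    (hinf : W ⊓ L = ⊥) (hsup : U ≤ W ⊔ L) :
    Function.Bijective (f ∘ₗ Submodule.inclusion hWU) := by
  refine ⟨(injective_iff_map_eq_zero _).2 fun w hw => ?_, fun q => ?_⟩
  · have hwL : w.1 ∈ W ⊓ L := ⟨w.2, (hker _).1 hw⟩
    rw [hinf] at hwL
    exact Subtype.ext ((Submodule.mem_bot R).1 hwL)
  · obtain ⟨x, rfl⟩ := hf q
    obtain ⟨a, ha, c, hc, hac⟩ := Submodule.mem_sup.1 (hsup x.2)
    refine ⟨⟨a, ha⟩, ?_⟩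
    rw [LinearMap.comp_apply, ← sub_eq_zero, ← map_sub, hker]
    simpa [← hac] using L.neg_mem hc

section IntervalModule

variable {K : Type} [Field K] {P : Type} [Preorder P] {M : PersistenceModule K P} {A : Set P}
  {W : Submodule K (∀ v : A, M.obj v.1)}

theorem apply_mem_filtrateFam {w : ∀ v : A, M.obj v.1} (hw : w ∈ W) (v : A) :
    w v ∈ filtrateFam K M A W v.1 :=
  Submodule.mem_iSup_of_mem v.2 ⟨w, hw, rfl⟩

theorem filtrateFam_eq_bot {u : P} (hu : u ∉ A) : filtrateFam K M A W u = ⊥ :=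
  iSup_neg hu

theorem eq_zero_of_mem_filtrateFam {u : P} (hu : u ∉ A) {x : M.obj u}
    (hx : x ∈ filtrateFam K M A W u) : x = 0 := by
  rwa [filtrateFam_eq_bot hu, Submodule.mem_bot] at hx

theorem filtrateFam_eq_map {u : P} (hu : u ∈ A) :
    filtrateFam K M A W u = W.map (projAt K M A u hu) :=
  iSup_pos hu

variable {n : ℕ} (e : Module.Basis (Fin n) K W)

noncomputable def basisCombination (u : P) :
    ((Subtype fun _ : Fin n => u ∈ A) → K) →ₗ[K] filtrateFam K M A W u :=
  LinearMap.codRestrict _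
    (∑ j : (Subtype fun _ : Fin n => u ∈ A),
      (LinearMap.proj j : ((Subtype fun _ : Fin n => u ∈ A) → K) →ₗ[K] K).smulRight
        ((e j.1 : ∀ v : A, M.obj v.1) ⟨u, j.2⟩))
    fun c => by
      simp only [LinearMap.coe_sum, Finset.sum_apply, LinearMap.smulRight_apply]
      exact Submodule.sum_mem _ fun j _ =>
        Submodule.smul_mem _ _ (apply_mem_filtrateFam (e j.1).2 ⟨u, j.2⟩)

theorem basisCombination_apply (u : P) (c : (Subtype fun _ : Fin n => u ∈ A) → K) :
    (basisCombination e u c).1 = ∑ j, c j • (e j.1 : ∀ v : A, M.obj v.1) ⟨u, j.2⟩ := by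
  simp [basisCombination]

theorem rho_basisCombination (hA : IsConvexSet A) (hW : W ≤ compatSections K M A)
    (hfam : ∀ (s u : P) (h : s ≤ u),
      Submodule.map (rho K M h) (filtrateFam K M A W s) ≤ filtrateFam K M A W u)
    {s u : P} (h : s ≤ u) (c : (Subtype fun _ : Fin n => s ∈ A) → K) :
    rho K M h (basisCombination e s c).1 =
      (basisCombination e u
        (((intervalDirectSum K (fun _ : Fin n => A) fun _ => hA).map (homOfLE h)).hom c)).1 := by
  by_cases hu : u ∈ A
  · by_cases hs : s ∈ A
    · simp only [intervalDirectSum, basisCombination_apply, map_sum, map_smul,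
        ModuleCat.hom_ofHom, dif_pos hs]
      refine Fintype.sum_equiv (Equiv.subtypeEquivRight fun _ => iff_of_true hs hu) _ _
        fun j => ?_
      rw [hW (e j.1).2 ⟨s, hs⟩ ⟨u, hu⟩ h]
      rfl
    · have : IsEmpty (Subtype fun _ : Fin n => s ∈ A) := ⟨fun j => hs j.2⟩
      simp only [intervalDirectSum, basisCombination_apply, ModuleCat.hom_ofHom, dif_neg hs,
        LinearMap.pi_zero, Finset.univ_eq_empty, Finset.sum_empty, map_zero]
      exact (Finset.sum_eq_zero fun j _ => zero_smul K _).symm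
  · exact (eq_zero_of_mem_filtrateFam hu (hfam s u h ⟨_, (basisCombination e s c).2, rfl⟩)).trans
      (eq_zero_of_mem_filtrateFam hu (Subtype.property _)).symm

theorem basisCombination_bijective (hinj : ∀ u : A, ∀ w ∈ W, w u = 0 → w = 0) (u : P) :
    Function.Bijective (basisCombination e u) := by
  by_cases hu : u ∈ A
  · let ev : W →ₗ[K] filtrateFam K M A W u := LinearMap.codRestrict _
      ((LinearMap.proj (⟨u, hu⟩ : A) : (∀ v : A, M.obj v.1) →ₗ[K] M.obj u) ∘ₗ W.subtype)
      fun w => apply_mem_filtrateFam w.2 ⟨u, hu⟩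
    have hev : Function.Bijective ev := by
      refine ⟨(injective_iff_map_eq_zero _).2 fun w hw => ?_, fun x => ?_⟩
      · exact Subtype.ext (hinj ⟨u, hu⟩ w.1 w.2 (congrArg Subtype.val hw))
      · obtain ⟨w, hw, hwx⟩ := (filtrateFam_eq_map hu).le x.2
        exact ⟨⟨w, hw⟩, Subtype.ext hwx⟩
    let b := e.reindex (Equiv.subtypeUnivEquiv fun _ => hu).symm
    have hfactor : ⇑(basisCombination e u) = ev ∘ b.equivFun.symm := funext fun c =>
      Subtype.ext (by simp [basisCombination_apply, Module.Basis.equivFun_symm_apply, b]; rfl)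
    rw [hfactor]
    exact hev.comp b.equivFun.symm.bijective
  · have : IsEmpty (Subtype fun _ : Fin n => u ∈ A) := ⟨fun j => hu j.2⟩
    refine ⟨Function.injective_of_subsingleton _, fun x => ⟨0, ?_⟩⟩
    exact Subtype.ext (by rw [map_zero, Submodule.coe_zero, eq_zero_of_mem_filtrateFam hu x.2])

theorem finiteDimensional_of_forall_apply_eq_zero (hM : Pfd K M)
    (hinj : ∀ u : A, ∀ w ∈ W, w u = 0 → w = 0) : FiniteDimensional K W := by
  cases isEmpty_or_nonempty A with
  | inl => exact inferInstance
  | inr hA =>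
    obtain ⟨u⟩ := hA
    have := hM u.1
    exact FiniteDimensional.of_injective
      ((LinearMap.proj u : (∀ v : A, M.obj v.1) →ₗ[K] M.obj u.1) ∘ₗ W.subtype)
      ((injective_iff_map_eq_zero _).2 fun w hw => Subtype.ext (hinj u w.1 w.2 hw))

theorem nonempty_iso_intervalDirectSum (hA : IsConvexSet A) (hW : W ≤ compatSections K M A)
    (hinj : ∀ u : A, ∀ w ∈ W, w u = 0 → w = 0)
    (hfam : ∀ (s u : P) (h : s ≤ u),
      Submodule.map (rho K M h) (filtrateFam K M A W s) ≤ filtrateFam K M A W u)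
    (e : Module.Basis (Fin n) K W) :
    Nonempty (subfunctor K M (filtrateFam K M A W) hfam ≅
      intervalDirectSum K (fun _ : Fin n => A) (fun _ => hA)) :=
  ⟨(NatIso.ofComponents
    (fun u => (LinearEquiv.ofBijective _ (basisCombination_bijective e hinj u)).toModuleIso)
    fun f => ModuleCat.hom_ext <| LinearMap.ext fun c => Subtype.ext <| by
      exact (rho_basisCombination e hA hW hfam (leOfHom f) c).symm).symm⟩

end IntervalModule

theorem filtrate_iso_power_of_rectangle_module_general
    (K : Type) [Field K] (X Y : Type) [LinearOrder X] [LinearOrder Y]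
    (M : PersistenceModule K (X × Y)) (hM : Pfd K M) (hwe : WeaklyExact K M)
    (l r : Cut X) (b t : Cut Y)
    (W : Submodule K (∀ v : ↥(rectOf l r b t), M.obj v.1))
    (hWle : W ≤ limVplus K M l r b t)
    (hWinf : W ⊓ limVminus K M l r b t = ⊥)
    (hWsup : W ⊔ limVminus K M l r b t = limVplus K M l r b t)
    (hfam : ∀ (s u : X × Y) (h : s ≤ u),
      Submodule.map (rho K M h) (filtrateFam K M (rectOf l r b t) W s) ≤
        filtrateFam K M (rectOf l r b t) W u) :
    Nonempty (subfunctor K M (filtrateFam K M (rectOf l r b t) W) hfam ≅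
      intervalDirectSum K
        (fun _ : Fin (Module.finrank K ↥(countingSpace K M l r b t)) => rectOf l r b t)
        (fun _ => isConvex_rectOf l r b t)) := by
  have hinj : ∀ u, ∀ w ∈ W, w u = 0 → w = 0 := fun u _ hw h0 =>
    eq_zero_of_mem_of_apply_eq_zero hwe hWle hWinf hw u h0
  have := finiteDimensional_of_forall_apply_eq_zero hM hinj
  have hW_equiv := bijective_comp_inclusion_of_sup_eq_of_inf_eq_bot
    (Q := countingSpace K M l r b t) (toCounting K M l r b t)
    (toCounting_surjective hM) toCounting_eq_zero_iff hWle hWinf hWsup.ge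
  exact nonempty_iso_intervalDirectSum _ (hWle.trans inf_le_left) hinj hfam
    (Module.finBasisOfFinrankEq K W (LinearEquiv.ofBijective _ hW_equiv).finrank_eq)

/-- **Statement 12.** The submodule `M_R` obtained from a complement `W` of `L⁻` in `L⁺`
chosen inside `lim (Ker⁺_r ∩ Ker⁺_t)` is isomorphic to a direct sum of `dim C_R(M)` copies of
the rectangle module `k_R`. -/
theorem filtrate_iso_power_of_rectangle_module
    (K : Type) [Field K] (X Y : Type) [LinearOrder X] [LinearOrder Y]
    (hX : ∃ C : Set X, C.Countable ∧ ∀ x : X, ∃ c ∈ C, c ≤ x)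
    (hY : ∃ C : Set Y, C.Countable ∧ ∀ y : Y, ∃ c ∈ C, c ≤ y)
    (M : PersistenceModule K (X × Y)) (hM : Pfd K M) (hwe : WeaklyExact K M)
    (l r : Cut X) (b t : Cut Y)
    (hcond : ∀ s ∈ rectOf l r b t,
      KerPlusH K M r s ⊓ KerPlusV K M t s ≤ ImPlusR K M l b s)
    (W : Submodule K (∀ v : ↥(rectOf l r b t), M.obj v.1))
    (hWle : W ≤ limVplus K M l r b t)
    (hWker : W ≤ Submodule.pi Set.univ (fun v : ↥(rectOf l r b t) =>
      KerPlusH K M r v.1 ⊓ KerPlusV K M t v.1))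
    (hWinf : W ⊓ limVminus K M l r b t = ⊥)
    (hWsup : W ⊔ limVminus K M l r b t = limVplus K M l r b t)
    (hfam : ∀ (s u : X × Y) (h : s ≤ u),
      Submodule.map (rho K M h) (filtrateFam K M (rectOf l r b t) W s) ≤
        filtrateFam K M (rectOf l r b t) W u) :
    Nonempty (subfunctor K M (filtrateFam K M (rectOf l r b t) W) hfam ≅
      intervalDirectSum K
        (fun _ : Fin (Module.finrank K ↥(countingSpace K M l r b t)) => rectOf l r b t)
        (fun _ => isConvex_rectOf l r b t)) :=
  filtrate_iso_power_of_rectangle_module_general K X Y M hM hwe l r b t W hWle hWinf hWsup hfam
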